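/- Let p ≡ 1 (mod 3) be prime and n coprime to p. Then |S_p(n;χ₀)|² ≤ C·p for an absolute constant C (e.g., C = 100), where χ₀ is the principal character modulo p. -/

import Mathlib

open Finset

/-- The additive character `a ↦ e^{2πi a/p}` on `ℤ/pℤ`. -/
noncomputable def eZMod (p : ℕ) (a : ZMod p) : ℂ :=
  Complex.exp (2 * Real.pi * Complex.I * a.val / p)

/-- The Kummer sum `S_p(n;χ) = ∑_a χ(a) e(n a³/p)`. -/
noncomputable def kummerSum (p : ℕ) [NeZero p] (n : ZMod p)
    (χ : DirichletCharacter ℂ p) : ℂ :=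
  ∑ a : ZMod p, χ a * eZMod p (n * a ^ 3)

lemma eZMod_eq_stdAddChar (p : ℕ) [NeZero p] (a : ZMod p) :
    eZMod p a = ZMod.stdAddChar a := by
  rw [ZMod.stdAddChar_apply, ZMod.toCircle_apply, eZMod]

/-- Splitting a sum over `ZMod p` into the zero term and the sum over units. -/
lemma sum_eq_zero_add {p : ℕ} [Fact p.Prime] (h : ZMod p → ℂ) :
    ∑ a : ZMod p, h a = h 0 + ∑ u : (ZMod p)ˣ, h ↑u := by
  classical
  have hU : (Finset.univ : Finset (ZMod p)) = insert 0 (Finset.univ.image (Units.val)) := by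
    ext x
    simp only [mem_univ, true_iff, mem_insert, mem_image]
    rcases eq_or_ne x 0 with hx | hx
    · exact Or.inl hx
    · exact Or.inr ⟨(isUnit_iff_ne_zero.mpr hx).unit, by simp⟩
  rw [hU, Finset.sum_insert (by simp), Finset.sum_image (fun a _ b _ h => Units.ext h)]

/-- The key counting identity: summing `f` over cubes (with multiplicity) equals summing
`(1 + χ + χ²) f` for a character `χ` of order `3`. -/
lemma cube_sum_eq {p : ℕ} [Fact p.Prime] (hp : p % 3 = 1) (χ : MulChar (ZMod p) ℂ)
    (hχ : orderOf χ = 3) (f : ZMod p → ℂ) :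
    ∑ a : (ZMod p)ˣ, f ((a : ZMod p) ^ 3)
      = ∑ a : (ZMod p)ˣ, (1 + χ a + χ a ^ 2) * f a := by
  classical
  set G := (ZMod p)ˣ
  set c : G →* G := powMonoidHom 3 with hc
  have hχ3 : χ ^ 3 = 1 := hχ ▸ pow_orderOf_eq_one χ
  have hχ1 : χ ≠ 1 := by
    intro h
    rw [h, orderOf_one] at hχ
    norm_num at hχ
  have hzcube : ∀ a : G, χ (a : ZMod p) ^ 3 = 1 := by
    intro a
    rw [← MulChar.pow_apply_coe, hχ3, MulChar.one_apply_coe]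
  -- the kernel of cubing is the group of cube roots of unity, which has 3 elements
  have hker : c.ker = rootsOfUnity 3 (ZMod p) := by
    ext x
    rw [MonoidHom.mem_ker, mem_rootsOfUnity]
    simp [hc, powMonoidHom_apply]
  have hp2 := (Fact.out : p.Prime).two_le
  have h3p : 3 ∣ p - 1 := by omega
  have hcardker : Nat.card c.ker = 3 := by
    obtain ⟨g, hg⟩ := IsCyclic.exists_ofOrder_eq_natCard (α := G)
    have hcardG : Nat.card G = p - 1 := by
      rw [Nat.card_eq_fintype_card, ZMod.card_units]
    have hordg : orderOf g = p - 1 := hg.trans hcardG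
    set ζ : G := g ^ ((p - 1) / 3) with hζ
    obtain ⟨k, hk⟩ := h3p
    have hk0 : 0 < k := by omega
    have hordζ : orderOf ζ = 3 := by
      rw [hζ, orderOf_pow, hordg, hk, Nat.mul_div_cancel_left _ (by norm_num),
        Nat.gcd_eq_right (dvd_mul_left k 3), Nat.mul_div_cancel _ hk0]
    have hprim : IsPrimitiveRoot ζ 3 := hordζ ▸ IsPrimitiveRoot.orderOf ζ
    rw [hker, hprim.card_rootsOfUnity']
  have hcardG : Nat.card G = 3 * Nat.card c.range := by
    have h1 : Nat.card G = Nat.card (G ⧸ c.ker) * Nat.card c.ker :=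
      Subgroup.card_eq_card_quotient_mul_card_subgroup c.ker
    have h2 : Nat.card (G ⧸ c.ker) = Nat.card c.range :=
      Nat.card_congr (QuotientGroup.quotientKerEquivRange c).toEquiv
    rw [h1, h2, hcardker, mul_comm]
  -- the range of cubing equals the kernel of χ on units
  have hle : c.range ≤ χ.toUnitHom.ker := by
    rintro x ⟨a, rfl⟩
    rw [MonoidHom.mem_ker]
    apply Units.ext
    rw [MulChar.coe_toUnitHom]
    have hval : ((c a : G) : ZMod p) = ((a : ZMod p)) ^ 3 := rfl
    rw [hval, map_pow, hzcube a, Units.val_one]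
  have hkerne : χ.toUnitHom.ker ≠ ⊤ := by
    intro h
    apply hχ1
    apply MulChar.ext
    intro a
    have h1 : χ.toUnitHom a = 1 := by
      rw [← MonoidHom.mem_ker, h]; trivial
    have h2 := congrArg (Units.val) h1
    rw [MulChar.coe_toUnitHom] at h2
    rw [MulChar.one_apply_coe]
    simpa using h2
  have hrange_eq : c.range = χ.toUnitHom.ker := by
    have hd1 : Nat.card c.range ∣ Nat.card χ.toUnitHom.ker := Subgroup.card_dvd_of_le hle
    have hd2 : Nat.card χ.toUnitHom.ker ∣ Nat.card G := Subgroup.card_subgroup_dvd_card _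
    have hpos : 0 < Nat.card c.range := Nat.card_pos
    obtain ⟨t, ht⟩ := hd1
    have htdvd : t ∣ 3 := by
      rw [ht, hcardG, mul_comm 3] at hd2
      exact (Nat.mul_dvd_mul_iff_left hpos).mp hd2
    rcases (Nat.prime_three).eq_one_or_self_of_dvd t htdvd with h1 | h3
    · subst h1
      apply SetLike.ext'
      apply Set.eq_of_subset_of_ncard_le hle
      rw [← Nat.card_coe_set_eq, ← Nat.card_coe_set_eq]
      show Nat.card χ.toUnitHom.ker ≤ Nat.card c.range
      omega
    · exfalso
      apply hkerne
      apply Subgroup.eq_top_of_card_eq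
      rw [ht, h3, hcardG, Nat.mul_comm]
  have himage : Finset.univ.image c = Finset.univ.filter (fun b : G => χ (b : ZMod p) = 1) := by
    ext b
    simp only [mem_image, mem_filter, mem_univ, true_and]
    constructor
    · rintro ⟨a, rfl⟩
      have hmem : c a ∈ χ.toUnitHom.ker := hrange_eq ▸ (MonoidHom.mem_range.mpr ⟨a, rfl⟩)
      have h2 := congrArg (Units.val) (MonoidHom.mem_ker.mp hmem)
      rw [MulChar.coe_toUnitHom] at h2
      simpa using h2
    · intro hb
      have : b ∈ c.range := by
        rw [hrange_eq, MonoidHom.mem_ker]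
        apply Units.ext
        rw [MulChar.coe_toUnitHom, hb, Units.val_one]
      obtain ⟨a, ha⟩ := this
      exact ⟨a, ha⟩
  -- fibers of the cubing map have cardinality 3
  have hfiber : ∀ b ∈ Finset.univ.image c,
      (Finset.univ.filter (fun a : G => c a = b)).card = 3 := by
    intro b hb
    obtain ⟨a₀, _, ha₀⟩ := mem_image.mp hb
    have hbij : (Finset.univ.filter (fun a : G => c a = b)).card
        = (Finset.univ.filter (fun a : G => c a = 1)).card := by
      apply Finset.card_bij (fun a _ => a * a₀⁻¹)
      · intro a ha
        simp only [mem_filter, mem_univ, true_and] at ha ⊢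
        rw [map_mul, map_inv, ha, ha₀, mul_inv_cancel]
      · intro a ha a' ha' h
        exact mul_right_cancel h
      · intro a ha
        simp only [mem_filter, mem_univ, true_and] at ha ⊢
        exact ⟨a * a₀, by rw [map_mul, ha, ha₀, one_mul], by rw [mul_assoc, mul_inv_cancel, mul_one]⟩
    rw [hbij]
    have hkerfin : (Finset.univ.filter (fun a : G => c a = 1))
        = (Finset.univ.filter (fun a : G => a ∈ c.ker)) := by
      ext a; simp [MonoidHom.mem_ker]
    rw [hkerfin, ← Fintype.card_subtype, ← Nat.card_eq_fintype_card]
    exact hcardker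
  -- put everything together
  have hval : ∀ a : G, ((a : ZMod p)) ^ 3 = ((c a : G) : ZMod p) := fun a => rfl
  calc ∑ a : G, f ((a : ZMod p) ^ 3)
      = ∑ a : G, (fun b : G => f (b : ZMod p)) (c a) := by
        refine Finset.sum_congr rfl fun a _ => ?_
        simp only
        rw [hval]
    _ = ∑ b ∈ Finset.univ.image c,
          (Finset.univ.filter (fun a : G => c a = b)).card • f (b : ZMod p) :=
        Finset.sum_comp (fun b : G => f (b : ZMod p)) c
    _ = ∑ b ∈ Finset.univ.image c, (3 : ℂ) * f (b : ZMod p) := by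
        refine Finset.sum_congr rfl fun b hb => ?_
        rw [hfiber b hb]
        simp [nsmul_eq_mul]
    _ = ∑ b ∈ Finset.univ.filter (fun b : G => χ (b : ZMod p) = 1),
          (3 : ℂ) * f (b : ZMod p) := by rw [himage]
    _ = ∑ a : G, (if χ (a : ZMod p) = 1 then (3 : ℂ) * f (a : ZMod p) else 0) :=
        Finset.sum_filter _ _
    _ = ∑ a : G, (1 + χ (a : ZMod p) + χ (a : ZMod p) ^ 2) * f (a : ZMod p) := by
        refine Finset.sum_congr rfl fun a _ => ?_
        by_cases h : χ (a : ZMod p) = 1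
        · rw [if_pos h, h]
          norm_num
        · rw [if_neg h]
          have h0 : (χ (a : ZMod p) - 1) * (1 + χ (a : ZMod p) + χ (a : ZMod p) ^ 2) = 0 := by
            linear_combination hzcube a
          rcases mul_eq_zero.mp h0 with h1 | h2
          · exact absurd (sub_eq_zero.mp h1) h
          · rw [h2, zero_mul]

/-- The absolute value of a Gauss sum of a nontrivial character with a primitive additive
character of modulus-one values is `√p`. -/
lemma abs_gaussSum_eq {p : ℕ} [Fact p.Prime] {χ : MulChar (ZMod p) ℂ} (hχ : χ ≠ 1)
    {ψ : AddChar (ZMod p) ℂ} (hψ : ψ.IsPrimitive) (hcirc : ∀ a, ‖ψ a‖ = 1) :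
    ‖gaussSum χ ψ‖ = Real.sqrt p := by
  have h := gaussSum_mul_gaussSum_eq_card hχ hψ
  have hconj : (starRingEnd ℂ) (gaussSum χ ψ) = gaussSum χ⁻¹ ψ⁻¹ := by
    rw [gaussSum, gaussSum, map_sum]
    refine Finset.sum_congr rfl fun a _ => ?_
    rw [map_mul]
    congr 1
    · exact MulChar.star_apply' χ a
    · rw [AddChar.inv_apply', Complex.inv_eq_conj (by exact hcirc a)]
  have h2 : (Complex.normSq (gaussSum χ ψ) : ℂ) = (p : ℂ) := by
    rw [← Complex.mul_conj, hconj, h, ZMod.card]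
  have h3 : Complex.normSq (gaussSum χ ψ) = (p : ℝ) := by
    exact_mod_cast h2
  rw [Complex.norm_def, h3]

/-- For a prime `p ≡ 1 (mod 3)` and `n` coprime to `p`, the principal-character Kummer sum
satisfies `|S_p(n;χ₀)|² ≤ 100 p`. -/
theorem kummer_sum_principal_bound (p : ℕ) [Fact p.Prime] (hp : p % 3 = 1)
    (n : ZMod p) (hn : n ≠ 0) :
    (‖kummerSum p n (1 : DirichletCharacter ℂ p)‖) ^ 2 ≤ 100 * p := by
  classical
  have hp2 := (Fact.out : p.Prime).two_le
  have h3p : 3 ∣ p - 1 := by omega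
  obtain ⟨χ, hχord⟩ := MulChar.exists_mulChar_orderOf (ZMod p)
    (n := 3) (by rw [ZMod.card]; exact h3p) (Complex.isPrimitiveRoot_exp 3 (by norm_num))
  have hχ1 : χ ≠ 1 := by
    intro h; rw [h, orderOf_one] at hχord; norm_num at hχord
  have hχ2 : χ ^ 2 ≠ 1 := by
    intro h
    have := orderOf_dvd_of_pow_eq_one h
    rw [hχord] at this
    norm_num at this
  -- the twisted additive character
  set ψ : AddChar (ZMod p) ℂ := (ZMod.stdAddChar (N := p)).mulShift n with hψdef
  have hψ : ψ.IsPrimitive := by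
    intro a ha
    rw [hψdef, AddChar.mulShift_mulShift]
    exact ZMod.isPrimitive_stdAddChar p (mul_ne_zero hn ha)
  have hψcirc : ∀ a, ‖ψ a‖ = 1 := by
    intro a
    rw [hψdef, AddChar.mulShift_apply, ZMod.stdAddChar_apply]
    exact Circle.norm_coe _
  have hψne : ψ ≠ 1 := by
    have := hψ (a := 1) one_ne_zero
    rwa [AddChar.mulShift_one] at this
  -- rewrite the Kummer sum
  have hS : kummerSum p n (1 : DirichletCharacter ℂ p)
      = -1 + gaussSum χ ψ + gaussSum (χ ^ 2) ψ := by
    have step1 : kummerSum p n (1 : DirichletCharacter ℂ p)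
        = ∑ u : (ZMod p)ˣ, ψ ((u : ZMod p) ^ 3) := by
      rw [kummerSum, sum_eq_zero_add]
      have h0 : (1 : DirichletCharacter ℂ p) (0 : ZMod p) = 0 :=
        MulChar.map_nonunit _ (by simp [not_isUnit_zero])
      rw [h0, zero_mul, zero_add]
      refine Finset.sum_congr rfl fun u _ => ?_
      rw [MulChar.one_apply_coe, one_mul, eZMod_eq_stdAddChar, hψdef, AddChar.mulShift_apply]
    rw [step1, cube_sum_eq hp χ hχord]
    have expand : ∀ u : (ZMod p)ˣ,
        (1 + χ (u : ZMod p) + χ (u : ZMod p) ^ 2) * ψ (u : ZMod p)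
          = ψ (u : ZMod p) + χ (u : ZMod p) * ψ (u : ZMod p)
            + (χ ^ 2) (u : ZMod p) * ψ (u : ZMod p) := by
      intro u
      rw [MulChar.pow_apply_coe]
      ring
    rw [Finset.sum_congr rfl fun u _ => expand u]
    rw [Finset.sum_add_distrib, Finset.sum_add_distrib]
    congr 1
    · congr 1
      · -- ∑ over units of ψ = -1
        have htot : ∑ a : ZMod p, ψ a = 0 := AddChar.sum_eq_zero_of_ne_one hψne
        rw [sum_eq_zero_add (fun a => ψ a)] at htot
        rw [AddChar.map_zero_eq_one] at htot
        linear_combination htot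
      · rw [gaussSum, sum_eq_zero_add (fun a => χ a * ψ a),
          MulChar.map_nonunit χ (by simp [not_isUnit_zero]), zero_mul, zero_add]
    · rw [gaussSum, sum_eq_zero_add (fun a => (χ ^ 2) a * ψ a),
        MulChar.map_nonunit (χ ^ 2) (by simp [not_isUnit_zero]), zero_mul, zero_add]
  have habs1 : ‖gaussSum χ ψ‖ = Real.sqrt p := abs_gaussSum_eq hχ1 hψ hψcirc
  have habs2 : ‖gaussSum (χ ^ 2) ψ‖ = Real.sqrt p := abs_gaussSum_eq hχ2 hψ hψcirc
  have hbound : ‖kummerSum p n (1 : DirichletCharacter ℂ p)‖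
      ≤ 1 + 2 * Real.sqrt p := by
    rw [hS]
    calc ‖-1 + gaussSum χ ψ + gaussSum (χ ^ 2) ψ‖
        ≤ ‖-1 + gaussSum χ ψ‖ + ‖gaussSum (χ ^ 2) ψ‖ :=
          norm_add_le _ _
      _ ≤ ‖(-1 : ℂ)‖ + ‖gaussSum χ ψ‖ + ‖gaussSum (χ ^ 2) ψ‖ := by
          gcongr
          exact norm_add_le _ _
      _ = 1 + 2 * Real.sqrt p := by
          rw [habs1, habs2]
          simp
          ring
  have hsq : Real.sqrt p ^ 2 = (p : ℝ) := Real.sq_sqrt (by positivity)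
  have h1s : 1 ≤ Real.sqrt p := by
    rw [show (1 : ℝ) = Real.sqrt 1 by simp]
    exact Real.sqrt_le_sqrt (by exact_mod_cast (by omega : 1 ≤ p))
  have habs0 : 0 ≤ ‖kummerSum p n (1 : DirichletCharacter ℂ p)‖ :=
    norm_nonneg _
  calc (‖kummerSum p n (1 : DirichletCharacter ℂ p)‖) ^ 2
      ≤ (1 + 2 * Real.sqrt p) ^ 2 := by
        apply pow_le_pow_left₀ habs0 hbound
    _ ≤ 100 * (p : ℝ) := by nlinarith [hsq, h1s]
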